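/- arXiv:1605.02353 — 8 statements merged into one kernel-verified Lean document; each statement's English description precedes it below -/
import Mathlib

section
/- Let L be the Laplacian of a weighted multigraph and suppose the first column of L is (d, −a)ᵀ with d > 0. Then the clique matrix C₁(L) = L₁ − (1/d) L(:,1) L(:,1)ᵀ, where L₁ is the Laplacian of edges incident on vertex 1, equals Σ_{i∼1} Σ_{j∼1} (w(1,i)w(1,j)/d) b_{(i,j)} b_{(i,j)}ᵀ; in particular C₁(L) is a Laplacian matrix (a nonnegative combination of pair-vector outer products). -/
/-!
Write `a = w v₀` and `d = ∑ a`. Since `w v₀ v₀ = 0`, the column `L(:,v₀)` is `d e₀ - a`, while the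
star Laplacian expands to `L₁ = diag a - e₀ aᵀ - a e₀ᵀ + d e₀ e₀ᵀ`; the Schur term cancels all but
`diag a`, leaving `diag a - aaᵀ / d`. On the other side `∑ᵢ ∑ⱼ aᵢ aⱼ b_{(i,j)} b_{(i,j)}ᵀ =
2d diag a - 2 aaᵀ`, which is the same matrix after scaling by `1 / (2d)`.
-/

/-- The pair-vector `b_{(i,j)} = e_j - e_i`. -/
def pairVec {V : Type*} [DecidableEq V] (u v : V) : V → ℝ :=
  fun i => (if i = v then 1 else 0) - (if i = u then 1 else 0)

open Matrix

namespace Laplacian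

variable {V : Type*} [Fintype V] [DecidableEq V]

theorem sum_smul_vecMulVec_pairVec_left (c : V → ℝ) (u : V) :
    ∑ i, c i • vecMulVec (pairVec u i) (pairVec u i)
      = diagonal c - vecMulVec (Pi.single u 1) c - vecMulVec c (Pi.single u 1)
        + (∑ i, c i) • vecMulVec (Pi.single u 1) (Pi.single u 1) := by
  ext x y
  simp only [pairVec, Matrix.sum_apply, Matrix.smul_apply, vecMulVec_apply, Matrix.add_apply,
    Matrix.sub_apply, diagonal_apply, Pi.single_apply, smul_eq_mul]
  by_cases hxy : x = y <;> by_cases hx : x = u <;> by_cases hy : y = u <;> subst_vars <;>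
    simp [mul_sub, Finset.sum_sub_distrib, Finset.sum_ite_eq, *] <;> ring

theorem sum_sum_smul_vecMulVec_pairVec (c : V → ℝ) :
    ∑ i, ∑ j, (c i * c j) • vecMulVec (pairVec i j) (pairVec i j)
      = (2 * ∑ i, c i) • diagonal c - (2 : ℝ) • vecMulVec c c := by
  ext x y
  simp only [pairVec, Matrix.sum_apply, Matrix.smul_apply, vecMulVec_apply, Matrix.sub_apply,
    diagonal_apply, smul_eq_mul]
  by_cases hxy : x = y <;> subst_vars <;>
    simp [mul_sub, Finset.sum_sub_distrib, Finset.sum_ite_eq,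
      ← Finset.sum_mul, ← Finset.mul_sum, *] <;> ring

theorem sum_smul_vecMulVec_pairVec_left_sub_schur (c : V → ℝ) (u : V) (hc : ∑ i, c i ≠ 0) :
    ∑ i, c i • vecMulVec (pairVec u i) (pairVec u i)
      - (∑ i, c i)⁻¹ • vecMulVec ((∑ i, c i) • Pi.single u 1 - c)
          ((∑ i, c i) • Pi.single u 1 - c)
      = diagonal c - (∑ i, c i)⁻¹ • vecMulVec c c := by
  rw [sum_smul_vecMulVec_pairVec_left, vecMulVec_sub, sub_vecMulVec, sub_vecMulVec,
    smul_vecMulVec, smul_vecMulVec, vecMulVec_smul, vecMulVec_smul]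
  match_scalars <;> field_simp <;> ring

theorem half_smul_sum_sum_div_smul_vecMulVec_pairVec (c : V → ℝ) (hc : ∑ i, c i ≠ 0) :
    (1 / 2 : ℝ) • ∑ i, ∑ j, (c i * c j / ∑ k, c k) • vecMulVec (pairVec i j) (pairVec i j)
      = diagonal c - (∑ i, c i)⁻¹ • vecMulVec c c := by
  have hscale : ∀ i j, (c i * c j / ∑ k, c k) • vecMulVec (pairVec i j) (pairVec i j)
      = (∑ k, c k)⁻¹ • (c i * c j) • vecMulVec (pairVec i j) (pairVec i j) := fun i j => by
    rw [smul_smul, div_eq_inv_mul]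
  simp_rw [hscale, ← Finset.smul_sum, sum_sum_smul_vecMulVec_pairVec]
  match_scalars <;> field_simp

def weightedLaplacian (w : V → V → ℝ) : Matrix V V ℝ :=
  Matrix.of fun i j => if i = j then ∑ k, w i k else -(w i j)

theorem weightedLaplacian_apply_self (w : V → V → ℝ) (v : V) :
    weightedLaplacian w v v = ∑ k, w v k := by
  simp [weightedLaplacian]

theorem weightedLaplacian_col (w : V → V → ℝ) (v : V) (hsym : ∀ i, w i v = w v i)
    (hloop : w v v = 0) :
    (fun i => weightedLaplacian w i v) = (∑ k, w v k) • Pi.single v 1 - w v := by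
  ext i
  by_cases hi : i = v
  · subst hi
    simp [weightedLaplacian, hloop]
  · simp [weightedLaplacian, hi, hsym]

end Laplacian

open Laplacian in
theorem clique_structure_of_schur_complement_general
    {V : Type*} [Fintype V] [DecidableEq V]
    (w : V → V → ℝ) (hsym : ∀ i j, w i j = w j i)
    (hdiag : ∀ i, w i i = 0)
    (L : Matrix V V ℝ)
    (hL : L = Matrix.of fun i j => if i = j then ∑ k, w i k else -(w i j))
    (v₀ : V) (hd : 0 < L v₀ v₀)
    (L₁ : Matrix V V ℝ)
    (hL₁ : L₁ = ∑ i, w v₀ i • Matrix.vecMulVec (pairVec v₀ i) (pairVec v₀ i)) :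
    L₁ - (L v₀ v₀)⁻¹ • Matrix.vecMulVec (fun i => L i v₀) (fun i => L i v₀)
      = (1 / 2 : ℝ) • ∑ i, ∑ j,
          (w v₀ i * w v₀ j / L v₀ v₀) • Matrix.vecMulVec (pairVec i j) (pairVec i j) := by
  replace hL : L = weightedLaplacian w := hL
  subst hL hL₁
  rw [weightedLaplacian_apply_self] at hd ⊢
  rw [weightedLaplacian_col w v₀ (fun i => hsym i v₀) (hdiag v₀),
    sum_smul_vecMulVec_pairVec_left_sub_schur _ _ hd.ne',
    half_smul_sum_sum_div_smul_vecMulVec_pairVec _ hd.ne']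

/-- Let `L` be the Laplacian of a weighted graph with positive degree
`d = L v₀ v₀ > 0` at vertex `v₀`.  The clique matrix
`C₁(L) = L₁ - (1/d) • L(:,v₀) L(:,v₀)ᵀ` (where `L₁` is the Laplacian of the edges incident
on `v₀`) equals `Σ_{i∼v₀} Σ_{j∼v₀} (w(v₀,i) w(v₀,j) / d) • b_{(i,j)} b_{(i,j)}ᵀ`
(each unordered pair being counted twice in the ordered double sum, whence the factor `1/2`);
in particular `C₁(L)` is a Laplacian matrix, being a nonnegative combination of pair-vector
outer products. -/
theorem clique_structure_of_schur_complement
    {V : Type*} [Fintype V] [DecidableEq V]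
    (w : V → V → ℝ) (hsym : ∀ i j, w i j = w j i) (hnonneg : ∀ i j, 0 ≤ w i j)
    (hdiag : ∀ i, w i i = 0)
    (L : Matrix V V ℝ)
    (hL : L = Matrix.of fun i j => if i = j then ∑ k, w i k else -(w i j))
    (v₀ : V) (hd : 0 < L v₀ v₀)
    (L₁ : Matrix V V ℝ)
    (hL₁ : L₁ = ∑ i, w v₀ i • Matrix.vecMulVec (pairVec v₀ i) (pairVec v₀ i)) :
    L₁ - (L v₀ v₀)⁻¹ • Matrix.vecMulVec (fun i => L i v₀) (fun i => L i v₀)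
      = (1 / 2 : ℝ) • ∑ i, ∑ j,
          (w v₀ i * w v₀ j / L v₀ v₀) • Matrix.vecMulVec (pairVec i j) (pairVec i j) :=
  clique_structure_of_schur_complement_general w hsym hdiag L hL v₀ hd L₁ hL₁
end

section
/- Eliminating a vertex v from a Laplacian yields another Laplacian: if L is the Laplacian of a connected weighted graph and L(v,v) > 0, then the Schur complement S = L − (1/L(v,v)) L(:,v) L(:,v)ᵀ is again a Laplacian matrix (symmetric, diagonally dominant, nonpositive off-diagonals, zero row sums). -/
/-!
Off the pivot row and column, `S i j = L i j - L i v * L j v / L v v` is a nonpositive entry minus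
a product of two nonpositive entries over a positive pivot, while row and column `v` of `S`
vanish. Row sums of `S` stay zero because column `v` of `L` sums to zero, and for a matrix with
nonpositive off-diagonal entries zero row sums already mean `∑_{j ≠ i} |S i j| = S i i`.
-/

open Finset

namespace Matrix

variable {V : Type*}

def weightedLaplacian [Fintype V] [DecidableEq V] (w : V → V → ℝ) : Matrix V V ℝ :=
  of fun i j => if i = j then ∑ k, w i k else -(w i j)

noncomputable def schurComplementAt (L : Matrix V V ℝ) (v : V) : Matrix V V ℝ :=
  L - (L v v)⁻¹ • vecMulVec (fun i => L i v) (fun i => L i v)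

section weightedLaplacian

variable [Fintype V] [DecidableEq V] {w : V → V → ℝ}

theorem weightedLaplacian_apply_of_ne {i j : V} (hij : i ≠ j) :
    weightedLaplacian w i j = -w i j := by
  simp [weightedLaplacian, hij]

theorem weightedLaplacian_isSymm (hsym : ∀ i j, w i j = w j i) :
    (weightedLaplacian w).IsSymm := by
  ext i j
  by_cases hij : i = j
  · rw [hij]; rfl
  · rw [transpose_apply, weightedLaplacian_apply_of_ne hij,
      weightedLaplacian_apply_of_ne (Ne.symm hij), hsym]

theorem weightedLaplacian_offDiag_nonpos (hnonneg : ∀ i j, 0 ≤ w i j) {i j : V} (hij : i ≠ j) :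
    weightedLaplacian w i j ≤ 0 := by
  simpa [weightedLaplacian_apply_of_ne hij] using hnonneg i j

theorem sum_weightedLaplacian_row (hdiag : ∀ i, w i i = 0) (i : V) :
    ∑ j, weightedLaplacian w i j = 0 := by
  rw [← add_sum_erase _ _ (mem_univ i)]
  have hoff : ∑ j ∈ univ.erase i, weightedLaplacian w i j = -∑ j ∈ univ.erase i, w i j := by
    rw [← sum_neg_distrib]
    exact sum_congr rfl fun j hj => weightedLaplacian_apply_of_ne (ne_of_mem_erase hj).symm
  rw [hoff, sum_erase _ (hdiag i)]
  simp [weightedLaplacian]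

end weightedLaplacian

theorem sum_abs_offDiag_eq_diag [Fintype V] [DecidableEq V] {M : Matrix V V ℝ}
    (hoff : ∀ i j, i ≠ j → M i j ≤ 0)
    (hrow : ∀ i, ∑ j, M i j = 0) (i : V) :
    ∑ j ∈ univ.filter (· ≠ i), |M i j| = M i i := by
  have habs : ∑ j ∈ univ.filter (· ≠ i), |M i j| = -∑ j ∈ univ.filter (· ≠ i), M i j := by
    rw [← sum_neg_distrib]
    exact sum_congr rfl fun j hj => abs_of_nonpos (hoff i j (mem_filter.mp hj).2.symm)
  have hsplit := add_sum_erase univ (M i) (mem_univ i)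
  rw [habs, filter_ne']
  linarith [hrow i]

section schurComplementAt

variable {L : Matrix V V ℝ} {v : V}

theorem schurComplementAt_apply (i j : V) :
    L.schurComplementAt v i j = L i j - (L v v)⁻¹ * (L i v * L j v) := by
  simp [schurComplementAt, vecMulVec_apply]

theorem schurComplementAt_apply_pivot (hv : L v v ≠ 0) (i : V) :
    L.schurComplementAt v i v = 0 := by
  rw [schurComplementAt_apply]
  field_simp
  ring

theorem schurComplementAt_isSymm (hL : L.IsSymm) : (L.schurComplementAt v).IsSymm := by
  ext i j
  rw [transpose_apply, schurComplementAt_apply, schurComplementAt_apply, hL.apply i j,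
    mul_comm (L i v)]

theorem sum_schurComplementAt_row [Fintype V] (hL : L.IsSymm)
    (hrow : ∀ i, ∑ j, L i j = 0) (i : V) :
    ∑ j, L.schurComplementAt v i j = 0 := by
  have hcol : ∑ j, L j v = 0 := by simpa only [hL.apply] using hrow v
  simp only [schurComplementAt_apply, sum_sub_distrib, ← mul_sum, hrow, hcol, mul_zero, sub_zero]

theorem schurComplementAt_offDiag_nonpos (hL : L.IsSymm) (hoff : ∀ i j, i ≠ j → L i j ≤ 0)
    (hv : 0 < L v v) {i j : V} (hij : i ≠ j) :
    L.schurComplementAt v i j ≤ 0 := by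
  by_cases hi : i = v
  · rw [hi, (schurComplementAt_isSymm hL).apply, schurComplementAt_apply_pivot hv.ne']
  by_cases hj : j = v
  · rw [hj, schurComplementAt_apply_pivot hv.ne']
  have hprod : 0 ≤ (L v v)⁻¹ * (L i v * L j v) :=
    mul_nonneg (inv_nonneg.mpr hv.le) (mul_nonneg_of_nonpos_of_nonpos (hoff i v hi) (hoff j v hj))
  rw [schurComplementAt_apply]
  linarith [hoff i j hij]

end schurComplementAt

end Matrix

open Matrix in
/-- Eliminating a vertex `v` from a Laplacian yields another Laplacian:
if `L` is the Laplacian of a weighted graph (with nonnegative symmetric weights) and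
`L v v > 0`, then the Schur complement `S = L - (1 / L v v) • L(:,v) L(:,v)ᵀ` is again a
Laplacian matrix: symmetric, with nonpositive off-diagonal entries, zero row sums, and
diagonally dominant. -/
theorem schur_complement_of_laplacian_is_laplacian
    {V : Type*} [Fintype V] [DecidableEq V]
    (w : V → V → ℝ) (hsym : ∀ i j, w i j = w j i) (hnonneg : ∀ i j, 0 ≤ w i j)
    (hdiag : ∀ i, w i i = 0)
    (L : Matrix V V ℝ)
    (hL : L = Matrix.of fun i j => if i = j then ∑ k, w i k else -(w i j))
    (v : V) (hv : 0 < L v v)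
    (S : Matrix V V ℝ)
    (hS : S = L - (L v v)⁻¹ • Matrix.vecMulVec (fun i => L i v) (fun i => L i v)) :
    S.IsSymm ∧ (∀ i j, i ≠ j → S i j ≤ 0) ∧ (∀ i, ∑ j, S i j = 0) ∧
      (∀ i, ∑ j ∈ Finset.univ.filter (· ≠ i), |S i j| ≤ S i i) := by
  obtain rfl : S = L.schurComplementAt v := hS
  obtain rfl : L = weightedLaplacian w := hL
  have hLsymm := weightedLaplacian_isSymm hsym
  have hLoff : ∀ i j, i ≠ j → weightedLaplacian w i j ≤ 0 :=
    fun _ _ => weightedLaplacian_offDiag_nonpos hnonneg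
  have hLrow := sum_weightedLaplacian_row hdiag
  have hSoff : ∀ i j, i ≠ j → (weightedLaplacian w).schurComplementAt v i j ≤ 0 :=
    fun _ _ => schurComplementAt_offDiag_nonpos hLsymm hLoff hv
  have hSrow := sum_schurComplementAt_row (v := v) hLsymm hLrow
  exact ⟨schurComplementAt_isSymm hLsymm, hSoff, hSrow,
    fun i => (sum_abs_offDiag_eq_diag hSoff hSrow i).le⟩
end

section
/- Effective resistance is a metric on the vertices of a connected graph: for distinct vertices u, v, z of a connected weighted multigraph with Laplacian L, ‖(L⁺)^{1/2} b_{u,z} b_{u,z}ᵀ (L⁺)^{1/2}‖ ≤ ‖(L⁺)^{1/2} b_{u,v} b_{u,v}ᵀ (L⁺)^{1/2}‖ + ‖(L⁺)^{1/2} b_{v,z} b_{v,z}ᵀ (L⁺)^{1/2}‖, i.e., b_{u,z}ᵀ L⁺ b_{u,z} ≤ b_{u,v}ᵀ L⁺ b_{u,v} + b_{v,z}ᵀ L⁺ b_{v,z}. -/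
/-!
Put `ψ_{ab} = L⁺ b_{ab}`. As `L L⁺` is the orthogonal projection onto `range L`, and `ker L`
consists of the constants on a connected graph, `L ψ_{ab} = b_{ab}`: `ψ_{ab}` is the potential
of a unit current from `a` to `b`, and `b_{ab}ᵀ L⁺ b_{ab} = ψ_{ab}(b) - ψ_{ab}(a)`. By the maximum
principle `ψ_{ab}` is largest at `b` and smallest at `a`, so by reciprocity
`b_{ab}ᵀ ψ_{cd} = ψ_{ab}(d) - ψ_{ab}(c) ≤ ψ_{ab}(b) - ψ_{ab}(a)`. Splitting
`b_{uz} = b_{uv} + b_{vz}` then gives the triangle inequality.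
-/

open Matrix

theorem Relation.ReflTransGen.mem_of_closed_off {α : Type*} {r : α → α → Prop} {S : Set α}
    {a b : α} (h : Relation.ReflTransGen r a b)
    (hS : ∀ x y, x ≠ b → r x y → x ∈ S → y ∈ S) (ha : a ∈ S) : b ∈ S := by
  induction h using Relation.ReflTransGen.head_induction_on with
  | refl => exact ha
  | @head x y hxy _ ih =>
    by_cases hx : x = b
    · exact hx ▸ ha
    · exact ih (hS x y hx hxy ha)

theorem Matrix.dotProduct_mulVec_comm_of_isSymm {R n : Type*} [CommSemiring R] [Fintype n]
    {A : Matrix n n R} (hA : A.IsSymm) (x y : n → R) : x ⬝ᵥ A *ᵥ y = A *ᵥ x ⬝ᵥ y := by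
  rw [dotProduct_mulVec, ← vecMul_transpose, hA]

theorem Matrix.mul_mul_pinv_eq_self {R n : Type*} [CommRing R] [Fintype n] {A A' : Matrix n n R}
    (hA : A.IsSymm) (h₁ : A * A' * A = A) (h₃ : (A * A')ᵀ = A * A') : A * (A * A') = A := by
  calc A * (A * A') = (A * A' * A)ᵀ := by rw [transpose_mul, h₃, hA]
    _ = A := by rw [h₁, hA]

section pairVec

variable {V : Type*} [DecidableEq V]

theorem pairVec_add_pairVec (u v z : V) : pairVec u v + pairVec v z = pairVec u z := by
  funext i
  simp only [pairVec, Pi.add_apply]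
  ring

theorem neg_pairVec (u v : V) : -pairVec u v = pairVec v u := by
  funext i
  simp only [pairVec, Pi.neg_apply]
  ring

variable [Fintype V]

theorem dotProduct_pairVec (x : V → ℝ) (u v : V) : x ⬝ᵥ pairVec u v = x v - x u := by
  simp [pairVec, dotProduct, mul_sub, Finset.sum_sub_distrib]

theorem pairVec_dotProduct (u v : V) (x : V → ℝ) : pairVec u v ⬝ᵥ x = x v - x u := by
  rw [dotProduct_comm, dotProduct_pairVec]

end pairVec

namespace Multigraph

variable {V E : Type*} [Fintype E] [DecidableEq V]

def Adj (ends : E → V × V) (x y : V) : Prop :=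
  ∃ e, ends e = (x, y) ∨ ends e = (y, x)

def laplacian (ends : E → V × V) (w : E → ℝ) : Matrix V V ℝ :=
  ∑ e, w e • vecMulVec (pairVec (ends e).1 (ends e).2) (pairVec (ends e).1 (ends e).2)

variable {ends : E → V × V} {w : E → ℝ}

theorem isSymm_laplacian : (laplacian ends w).IsSymm := by
  simp only [IsSymm, laplacian, transpose_sum, transpose_smul, transpose_vecMulVec]

variable [Fintype V]

theorem laplacian_mulVec_apply (ψ : V → ℝ) (x : V) :
    (laplacian ends w *ᵥ ψ) x = ∑ e, w e *
      ((if (ends e).2 = x then ψ x - ψ (ends e).1 else 0) +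
        (if (ends e).1 = x then ψ x - ψ (ends e).2 else 0)) := by
  simp only [laplacian, sum_mulVec, Finset.sum_apply, smul_mulVec, vecMulVec_mulVec,
    Pi.smul_apply, smul_eq_mul]
  refine Finset.sum_congr rfl fun e _ => ?_
  rw [pairVec_dotProduct]
  simp only [pairVec, MulOpposite.smul_eq_mul_unop, MulOpposite.unop_op]
  split_ifs <;> subst_vars <;> simp_all

theorem apply_eq_of_adj_of_forall_le (hw : ∀ e, 0 < w e) {ψ : V → ℝ} {x y : V}
    (hmax : ∀ z, ψ z ≤ ψ x) (hx : (laplacian ends w *ᵥ ψ) x ≤ 0) (hxy : Adj ends x y) :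
    ψ y = ψ x := by
  have hterm : ∀ e ∈ Finset.univ, 0 ≤ w e *
      ((if (ends e).2 = x then ψ x - ψ (ends e).1 else 0) +
        (if (ends e).1 = x then ψ x - ψ (ends e).2 else 0)) := fun e _ =>
    mul_nonneg (hw e).le <| add_nonneg
      (by split_ifs <;> linarith [hmax (ends e).1]) (by split_ifs <;> linarith [hmax (ends e).2])
  rw [laplacian_mulVec_apply] at hx
  have hzero :=
    (Finset.sum_eq_zero_iff_of_nonneg hterm).1 (le_antisymm hx (Finset.sum_nonneg hterm))
  obtain ⟨e, he | he⟩ := hxy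
  all_goals
    have := hzero e (Finset.mem_univ e)
    simp only [he, ↓reduceIte, sub_self, ite_self, zero_add, add_zero, mul_eq_zero, (hw e).ne',
      false_or] at this
    linarith

theorem le_apply_of_laplacian_mulVec_nonpos (hw : ∀ e, 0 < w e)
    (hconn : ∀ a b : V, Relation.ReflTransGen (Adj ends) a b) {ψ : V → ℝ} {v : V}
    (hψ : ∀ x, x ≠ v → (laplacian ends w *ᵥ ψ) x ≤ 0) (x : V) : ψ x ≤ ψ v := by
  have : Nonempty V := ⟨v⟩
  obtain ⟨x₀, hx₀⟩ := Finite.exists_max ψ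
  have : v ∈ {x | ∀ z, ψ z ≤ ψ x} := (hconn x₀ v).mem_of_closed_off
    (fun x y hxv hxy hx z => (apply_eq_of_adj_of_forall_le hw hx (hψ x hxv) hxy).symm ▸ hx z) hx₀
  exact this x

theorem apply_eq_of_laplacian_mulVec_eq_zero (hw : ∀ e, 0 < w e)
    (hconn : ∀ a b : V, Relation.ReflTransGen (Adj ends) a b) {ψ : V → ℝ}
    (hψ : laplacian ends w *ᵥ ψ = 0) (x y : V) : ψ x = ψ y := by
  have hψ' (v : V) : ∀ x, x ≠ v → (laplacian ends w *ᵥ ψ) x ≤ 0 := fun x _ => by simp [hψ]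
  exact le_antisymm (le_apply_of_laplacian_mulVec_nonpos hw hconn (hψ' y) x)
    (le_apply_of_laplacian_mulVec_nonpos hw hconn (hψ' x) y)

theorem le_apply_of_laplacian_mulVec_eq_pairVec (hw : ∀ e, 0 < w e)
    (hconn : ∀ a b : V, Relation.ReflTransGen (Adj ends) a b) {ψ : V → ℝ} {u v : V}
    (hψ : laplacian ends w *ᵥ ψ = pairVec u v) (x : V) : ψ x ≤ ψ v :=
  le_apply_of_laplacian_mulVec_nonpos hw hconn (fun x hxv => by
    simp only [hψ, pairVec, if_neg hxv]
    split_ifs <;> norm_num) x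

theorem apply_le_of_laplacian_mulVec_eq_pairVec (hw : ∀ e, 0 < w e)
    (hconn : ∀ a b : V, Relation.ReflTransGen (Adj ends) a b) {ψ : V → ℝ} {u v : V}
    (hψ : laplacian ends w *ᵥ ψ = pairVec u v) (x : V) : ψ u ≤ ψ x := by
  have := le_apply_of_laplacian_mulVec_eq_pairVec hw hconn (ψ := -ψ)
    (by rw [mulVec_neg, hψ, neg_pairVec]) x
  simpa using this

theorem pairVec_dotProduct_le (hw : ∀ e, 0 < w e)
    (hconn : ∀ a b : V, Relation.ReflTransGen (Adj ends) a b) {ψ φ : V → ℝ} {a b c d : V}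
    (hψ : laplacian ends w *ᵥ ψ = pairVec a b) (hφ : laplacian ends w *ᵥ φ = pairVec c d) :
    pairVec a b ⬝ᵥ φ ≤ pairVec a b ⬝ᵥ ψ := by
  calc pairVec a b ⬝ᵥ φ = ψ ⬝ᵥ pairVec c d := by
        rw [← hψ, ← hφ, dotProduct_mulVec_comm_of_isSymm isSymm_laplacian]
    _ ≤ pairVec a b ⬝ᵥ ψ := by
      rw [dotProduct_pairVec, pairVec_dotProduct]
      linarith [le_apply_of_laplacian_mulVec_eq_pairVec hw hconn hψ d,
        apply_le_of_laplacian_mulVec_eq_pairVec hw hconn hψ c]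

theorem laplacian_mulVec_mulVec_pairVec_of_pinv (hw : ∀ e, 0 < w e)
    (hconn : ∀ a b : V, Relation.ReflTransGen (Adj ends) a b) {Lp : Matrix V V ℝ}
    (h₁ : laplacian ends w * Lp * laplacian ends w = laplacian ends w)
    (h₃ : (laplacian ends w * Lp)ᵀ = laplacian ends w * Lp) (u v : V) :
    laplacian ends w *ᵥ (Lp *ᵥ pairVec u v) = pairVec u v := by
  -- `L * Lp` fixes `range L`, so the defect `c` lies in `ker L`, which consists of the
  -- constants; these are orthogonal to `b_{uv}`, and `c` is also orthogonal to `range L`.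
  set L := laplacian ends w
  set c := pairVec u v - L *ᵥ (Lp *ᵥ pairVec u v)
  have hLc : L *ᵥ c = 0 := by
    rw [mulVec_sub, mulVec_mulVec, mulVec_mulVec, Matrix.mul_assoc,
      mul_mul_pinv_eq_self isSymm_laplacian h₁ h₃, sub_self]
  have hcc : c ⬝ᵥ c = 0 := calc
    c ⬝ᵥ c = c ⬝ᵥ pairVec u v - c ⬝ᵥ L *ᵥ (Lp *ᵥ pairVec u v) := dotProduct_sub _ _ _
    _ = 0 := by
      rw [dotProduct_pairVec, apply_eq_of_laplacian_mulVec_eq_zero hw hconn hLc v u,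
        dotProduct_mulVec_comm_of_isSymm isSymm_laplacian, hLc, zero_dotProduct, sub_self,
        sub_self]
  exact (sub_eq_zero.1 (dotProduct_self_eq_zero.1 hcc)).symm

end Multigraph

theorem effective_resistance_triangle_inequality_general
    {V E : Type*} [Fintype V] [Fintype E] [DecidableEq V]
    (ends : E → V × V) (w : E → ℝ) (hw : ∀ e, 0 < w e)
    (hconn : ∀ a b : V, Relation.ReflTransGen
      (fun x y => ∃ e, ends e = (x, y) ∨ ends e = (y, x)) a b)
    (L : Matrix V V ℝ)
    (hL : L = ∑ e, w e • Matrix.vecMulVec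
      (pairVec (ends e).1 (ends e).2) (pairVec (ends e).1 (ends e).2))
    (Lp : Matrix V V ℝ)
    (hLp1 : L * Lp * L = L)
    (hLp3 : (L * Lp)ᵀ = L * Lp)
    (u v z : V) :
    pairVec u z ⬝ᵥ Lp.mulVec (pairVec u z)
      ≤ pairVec u v ⬝ᵥ Lp.mulVec (pairVec u v)
        + pairVec v z ⬝ᵥ Lp.mulVec (pairVec v z) := by
  change L = Multigraph.laplacian ends w at hL
  subst hL
  have hpot := Multigraph.laplacian_mulVec_mulVec_pairVec_of_pinv hw hconn hLp1 hLp3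
  calc pairVec u z ⬝ᵥ Lp *ᵥ pairVec u z
      = pairVec u v ⬝ᵥ Lp *ᵥ pairVec u z + pairVec v z ⬝ᵥ Lp *ᵥ pairVec u z := by
        rw [← pairVec_add_pairVec u v z, add_dotProduct]
    _ ≤ _ := add_le_add (Multigraph.pairVec_dotProduct_le hw hconn (hpot u v) (hpot u z))
        (Multigraph.pairVec_dotProduct_le hw hconn (hpot v z) (hpot u z))

/-- Effective resistance is a metric on the vertices of a connected
weighted multigraph: for distinct vertices `u, v, z` with Laplacian `L` and Moore–Penrose
pseudoinverse `Lp = L⁺` (characterized by the four Penrose conditions),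
`b_{u,z}ᵀ L⁺ b_{u,z} ≤ b_{u,v}ᵀ L⁺ b_{u,v} + b_{v,z}ᵀ L⁺ b_{v,z}`. -/
theorem effective_resistance_triangle_inequality
    {V E : Type*} [Fintype V] [Fintype E] [DecidableEq V]
    (ends : E → V × V) (w : E → ℝ) (hw : ∀ e, 0 < w e)
    (hconn : ∀ a b : V, Relation.ReflTransGen
      (fun x y => ∃ e, ends e = (x, y) ∨ ends e = (y, x)) a b)
    (L : Matrix V V ℝ)
    (hL : L = ∑ e, w e • Matrix.vecMulVec
      (pairVec (ends e).1 (ends e).2) (pairVec (ends e).1 (ends e).2))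
    (Lp : Matrix V V ℝ)
    (hLp1 : L * Lp * L = L) (hLp2 : Lp * L * Lp = Lp)
    (hLp3 : (L * Lp)ᵀ = L * Lp) (hLp4 : (Lp * L)ᵀ = Lp * L)
    (u v z : V) (huv : u ≠ v) (hvz : v ≠ z) (huz : u ≠ z) :
    pairVec u z ⬝ᵥ Lp.mulVec (pairVec u z)
      ≤ pairVec u v ⬝ᵥ Lp.mulVec (pairVec u v)
        + pairVec v z ⬝ᵥ Lp.mulVec (pairVec v z) :=
  effective_resistance_triangle_inequality_general ends w hw hconn L hL Lp hLp1 hLp3 u v z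
end

section
/- If Z is a random symmetric d×d matrix with E[Z] ⪯ 0 and ‖Z‖ ≤ 1 almost surely, then log E[exp(Z)] ⪯ (4/5) E[Z²]. -/
/-!
The scalar bound `e^x ≤ 1 + x + (4/5) x²` on `[-1, 1]` lifts through the functional calculus
to `exp Z ⪯ 1 + Z + (4/5) Z²`, since `‖Z‖ ≤ 1` confines the spectrum of `Z` to `[-1, 1]`.
Averaging and `E[Z] ⪯ 0` give `M := E[exp Z] ⪯ 1 + (4/5) E[Z²]`, and `log M ⪯ M - 1`,
again lifted from the scalar inequality, finishes the proof.
-/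

open scoped Matrix.Norms.L2Operator MatrixOrder

lemma Real.exp_le_one_add_add_four_fifths_mul_sq {x : ℝ} (hx : |x| ≤ 1) :
    Real.exp x ≤ 1 + x + 4 / 5 * x ^ 2 := by
  -- cubic Taylor remainder: `1/2 + 2/9 ≤ 4/5`
  have htaylor := abs_le.1 (Real.exp_bound hx (n := 3) (by norm_num))
  have hcube : |x| ^ 3 ≤ x ^ 2 := by
    rw [pow_succ, sq_abs]
    exact mul_le_of_le_one_right (sq_nonneg x) hx
  norm_num [Finset.sum_range_succ, Nat.factorial] at htaylor
  nlinarith [htaylor.2]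

section SelfAdjoint

variable {A : Type*} [NormedRing A] [StarRing A] [NormedAlgebra ℝ A]
  [PartialOrder A] [StarOrderedRing A] [ContinuousFunctionalCalculus ℝ A IsSelfAdjoint]

lemma IsSelfAdjoint.exp_le_one_add_add_smul_mul_self {a : A} (ha : IsSelfAdjoint a)
    (h : spectrum ℝ a ⊆ Set.Icc (-1) 1) :
    NormedSpace.exp a ≤ 1 + a + (4 / 5 : ℝ) • (a * a) := by
  have hpoly :
      cfc (fun x : ℝ => 1 + x + 4 / 5 * x ^ 2) a = 1 + a + (4 / 5 : ℝ) • (a * a) := by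
    rw [cfc_add a (fun x : ℝ => 1 + x) (fun x : ℝ => 4 / 5 * x ^ 2),
      cfc_const_add 1 (fun x => x) a, cfc_const_mul (4 / 5 : ℝ) (fun x : ℝ => x ^ 2) a,
      cfc_pow (fun x : ℝ => x) 2 a, cfc_id' ℝ a]
    simp [sq, Algebra.algebraMap_eq_smul_one]
  rw [← CFC.real_exp_eq_normedSpace_exp ha, ← hpoly]
  exact cfc_mono fun x hx => Real.exp_le_one_add_add_four_fifths_mul_sq (abs_le.2 (h hx))

lemma IsSelfAdjoint.algebraMap_exp_le_exp [NonnegSpectrumClass ℝ A] {a : A}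
    (ha : IsSelfAdjoint a) {r : ℝ} (h : ∀ x ∈ spectrum ℝ a, r ≤ x) :
    algebraMap ℝ A (Real.exp r) ≤ NormedSpace.exp a := by
  rw [← CFC.real_exp_eq_normedSpace_exp ha]
  exact (algebraMap_le_cfc_iff _ _ a).2 fun x hx => Real.exp_le_exp.2 (h x hx)

lemma IsSelfAdjoint.cfc_log_le_sub_one {a : A} (ha : IsSelfAdjoint a)
    (h : ∀ x ∈ spectrum ℝ a, 0 < x) : cfc Real.log a ≤ a - 1 := by
  have hlog : ContinuousOn Real.log (spectrum ℝ a) :=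
    Real.continuousOn_log.mono fun x hx => (h x hx).ne'
  calc cfc Real.log a ≤ cfc (fun x : ℝ => x - 1) a :=
        cfc_mono (fun x hx => Real.log_le_sub_one_of_pos (h x hx))
    _ = a - 1 := by
        rw [cfc_sub (fun x : ℝ => x) (fun _ => 1) a, cfc_id' ℝ a, cfc_const 1 a, map_one]

theorem cfc_log_sum_smul_exp_le [StarModule ℝ A] [NonnegSpectrumClass ℝ A]
    {Ω : Type*} [Fintype Ω] (p : Ω → ℝ) (hp : ∀ ω, 0 ≤ p ω) (hsum : ∑ ω, p ω = 1)
    (Z : Ω → A) (hZ : ∀ ω, IsSelfAdjoint (Z ω))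
    (hmean : ∑ ω, p ω • Z ω ≤ 0) (hspec : ∀ ω, spectrum ℝ (Z ω) ⊆ Set.Icc (-1) 1) :
    cfc Real.log (∑ ω, p ω • NormedSpace.exp (Z ω)) ≤
      (4 / 5 : ℝ) • ∑ ω, p ω • (Z ω * Z ω) := by
  set M := ∑ ω, p ω • NormedSpace.exp (Z ω)
  have hM : IsSelfAdjoint M :=
    isSelfAdjoint_sum _ fun ω _ => (IsSelfAdjoint.all (p ω)).smul (hZ ω).exp_nonneg.isSelfAdjoint
  -- `log x ≤ x - 1` fails at `x = 0` (where `Real.log 0 = 0`), so `M` must be kept away from `0`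
  have hM_lower : algebraMap ℝ A (Real.exp (-1)) ≤ M := calc
    algebraMap ℝ A (Real.exp (-1)) = ∑ ω, p ω • algebraMap ℝ A (Real.exp (-1)) := by
      rw [← Finset.sum_smul, hsum, one_smul]
    _ ≤ M := Finset.sum_le_sum fun ω _ => smul_le_smul_of_nonneg_left
      ((hZ ω).algebraMap_exp_le_exp fun x hx => (hspec ω hx).1) (hp ω)
  have hM_pos : ∀ x ∈ spectrum ℝ M, 0 < x := fun x hx =>
    (Real.exp_pos _).trans_le ((algebraMap_le_iff_le_spectrum hM).1 hM_lower x hx)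
  have hM_upper : M ≤ 1 + (4 / 5 : ℝ) • ∑ ω, p ω • (Z ω * Z ω) := calc
    M ≤ ∑ ω, p ω • (1 + Z ω + (4 / 5 : ℝ) • (Z ω * Z ω)) :=
      Finset.sum_le_sum fun ω _ => smul_le_smul_of_nonneg_left
        (IsSelfAdjoint.exp_le_one_add_add_smul_mul_self (hZ ω) (hspec ω)) (hp ω)
    _ = 1 + ∑ ω, p ω • Z ω + (4 / 5 : ℝ) • ∑ ω, p ω • (Z ω * Z ω) := by
      simp only [smul_add, Finset.sum_add_distrib, ← Finset.sum_smul, hsum, one_smul,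
        Finset.smul_sum, smul_comm (p _)]
    _ ≤ 1 + (4 / 5 : ℝ) • ∑ ω, p ω • (Z ω * Z ω) := by simpa using hmean
  calc cfc Real.log M ≤ M - 1 := hM.cfc_log_le_sub_one hM_pos
    _ ≤ (4 / 5 : ℝ) • ∑ ω, p ω • (Z ω * Z ω) := sub_le_iff_le_add'.2 hM_upper

end SelfAdjoint

lemma Matrix.abs_le_norm_of_mem_spectrum {d : Type*} [Fintype d] [DecidableEq d]
    {A : Matrix d d ℝ} {x : ℝ} (hx : x ∈ spectrum ℝ A) : |x| ≤ ‖A‖ := by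
  -- `‖1‖ = 1` needs `d` nonempty; for empty `d` the spectrum is empty
  have : Nonempty d := by
    by_contra! hd
    simp [spectrum.of_subsingleton] at hx
  exact spectrum.norm_le_norm_of_mem hx

/-- If `Z` is a random symmetric `d × d` matrix (here: finitely supported,
given by weights `p` on a finite sample space `Ω`) with `E[Z] ⪯ 0` and `‖Z‖ ≤ 1` almost
surely (spectral norm), then `log E[exp Z] ⪯ (4/5) E[Z²]` in the Loewner order, where
`exp` is the matrix exponential and `log` the matrix logarithm (via the continuous
functional calculus). -/
theorem matrix_mgf_bound_by_second_moment
    {d Ω : Type*} [Fintype d] [DecidableEq d] [Fintype Ω]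
    (p : Ω → ℝ) (hp : ∀ ω, 0 ≤ p ω) (hsum : ∑ ω, p ω = 1)
    (Z : Ω → Matrix d d ℝ) (hherm : ∀ ω, (Z ω).IsHermitian)
    (hmean : (-(∑ ω, p ω • Z ω)).PosSemidef)
    (hnorm : ∀ ω, ‖Z ω‖ ≤ 1) :
    ((4 / 5 : ℝ) • (∑ ω, p ω • (Z ω * Z ω))
      - cfc Real.log (∑ ω, p ω • NormedSpace.exp (Z ω))).PosSemidef := by
  rw [← Matrix.nonneg_iff_posSemidef, sub_nonneg]
  refine cfc_log_sum_smul_exp_le p hp hsum Z (fun ω => (hherm ω).isSelfAdjoint) ?_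
    fun ω x hx => abs_le.1 ((Matrix.abs_le_norm_of_mem_spectrum hx).trans (hnorm ω))
  rwa [← neg_nonneg, Matrix.nonneg_iff_posSemidef]
end

section
/- If C is a random positive semidefinite d×d matrix with ‖C‖ ≤ 1/3 almost surely, then log E[exp(C)] ⪯ (6/5) E[C]. -/
/-!
Since the spectrum of each `C ω` lies in `[0, 1/3]`, the scalar inequality
`1 ≤ eˣ ≤ 1 + (6/5) x` there lifts through the functional calculus to
`1 ⪯ exp (C ω) ⪯ 1 + (6/5) C ω`; averaging gives `1 ⪯ E[exp C] ⪯ 1 + (6/5) E[C]`.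
Then `log A ⪯ A - 1` for the strictly positive `A = E[exp C]`, from `log x ≤ x - 1`.
-/

open scoped Matrix.Norms.L2Operator MatrixOrder

theorem Real.exp_le_one_add_six_fifths_mul {x : ℝ} (h₀ : 0 ≤ x) (h₁ : x ≤ 1 / 3) :
    Real.exp x ≤ 1 + 6 / 5 * x := by
  have h := Real.exp_bound' h₀ (by linarith) (n := 3) (by norm_num)
  norm_num [Finset.sum_range_succ, Nat.factorial] at h
  nlinarith [mul_nonneg h₀ (sub_nonneg.2 h₁), mul_nonneg (mul_nonneg h₀ h₀) (sub_nonneg.2 h₁)]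

section CFC

variable {A : Type*} [NormedRing A] [StarRing A] [NormedAlgebra ℝ A] [PartialOrder A]
  [StarOrderedRing A] [ContinuousFunctionalCalculus ℝ A IsSelfAdjoint] [NonnegSpectrumClass ℝ A]

theorem one_le_cfc_exp {a : A} (ha : 0 ≤ a) : 1 ≤ cfc Real.exp a :=
  (one_le_cfc_iff Real.exp a (ha := .of_nonneg ha)).2 fun x hx ↦
    Real.one_le_exp (spectrum_nonneg_of_nonneg ha hx)

theorem cfc_exp_le_one_add_six_fifths_smul {a : A} (h₀ : 0 ≤ a)
    (h₁ : a ≤ algebraMap ℝ A (1 / 3)) : cfc Real.exp a ≤ 1 + (6 / 5 : ℝ) • a := by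
  have ha : IsSelfAdjoint a := .of_nonneg h₀
  calc cfc Real.exp a ≤ cfc (fun x ↦ 1 + 6 / 5 * x) a :=
        cfc_mono fun x hx ↦ Real.exp_le_one_add_six_fifths_mul (spectrum_nonneg_of_nonneg h₀ hx)
          ((le_algebraMap_iff_spectrum_le ha).1 h₁ x hx)
    _ = 1 + (6 / 5 : ℝ) • a := by
      rw [cfc_add .., cfc_const_one .., cfc_const_mul_id ..]

theorem CFC.log_le_sub_one {a : A} (ha : IsStrictlyPositive a) : CFC.log a ≤ a - 1 := by
  have hspec :=
    (StarOrderedRing.isStrictlyPositive_iff_spectrum_pos (R := ℝ) a ha.isSelfAdjoint).1 ha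
  have hlog : ContinuousOn Real.log (spectrum ℝ a) :=
    Real.continuousOn_log.mono fun x hx ↦ (hspec x hx).ne'
  calc CFC.log a ≤ cfc (fun x ↦ x - 1) a :=
        cfc_mono fun x hx ↦ Real.log_le_sub_one_of_pos (hspec x hx)
    _ = a - 1 := by rw [cfc_sub .., cfc_id' .., cfc_const_one ..]

end CFC

theorem Matrix.IsHermitian.le_algebraMap_norm {n : Type*} [Fintype n] [DecidableEq n]
    {M : Matrix n n ℝ} (hM : M.IsHermitian) : M ≤ algebraMap ℝ (Matrix n n ℝ) ‖M‖ := by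
  have norm_one_le : ‖(1 : Matrix n n ℝ)‖ ≤ 1 := by
    rw [Matrix.cstar_norm_def, map_one]
    exact ContinuousLinearMap.norm_id_le
  refine (le_algebraMap_iff_spectrum_le hM.isSelfAdjoint).2 fun x hx ↦ ?_
  calc x ≤ ‖x‖ := Real.le_norm_self x
    _ ≤ ‖M‖ * ‖(1 : Matrix n n ℝ)‖ := spectrum.norm_le_norm_mul_of_mem hx
    _ ≤ ‖M‖ := mul_le_of_le_one_right (norm_nonneg M) norm_one_le

/-- If `C` is a random positive semidefinite `d × d` matrix (finitely
supported, given by weights `p` on a finite sample space `Ω`) with `‖C‖ ≤ 1/3` almost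
surely (spectral norm), then `log E[exp C] ⪯ (6/5) E[C]` in the Loewner order. -/
theorem matrix_mgf_bound_by_first_moment
    {d Ω : Type*} [Fintype d] [DecidableEq d] [Fintype Ω]
    (p : Ω → ℝ) (hp : ∀ ω, 0 ≤ p ω) (hsum : ∑ ω, p ω = 1)
    (C : Ω → Matrix d d ℝ) (hpsd : ∀ ω, (C ω).PosSemidef)
    (hnorm : ∀ ω, ‖C ω‖ ≤ 1 / 3) :
    ((6 / 5 : ℝ) • (∑ ω, p ω • C ω)
      - cfc Real.log (∑ ω, p ω • NormedSpace.exp (C ω))).PosSemidef := by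
  set E := ∑ ω, p ω • NormedSpace.exp (C ω)
  have hexp ω : NormedSpace.exp (C ω) = cfc Real.exp (C ω) :=
    (CFC.real_exp_eq_normedSpace_exp (hpsd ω).isHermitian).symm
  have one_le_E : 1 ≤ E := calc
    (1 : Matrix d d ℝ) = ∑ ω, p ω • (1 : Matrix d d ℝ) := by
      rw [← Finset.sum_smul, hsum, one_smul]
    _ ≤ E := Finset.sum_le_sum fun ω _ ↦
      smul_le_smul_of_nonneg_left (hexp ω ▸ one_le_cfc_exp (hpsd ω).nonneg) (hp ω)
  have E_le : E ≤ 1 + (6 / 5 : ℝ) • ∑ ω, p ω • C ω := calc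
    E ≤ ∑ ω, p ω • (1 + (6 / 5 : ℝ) • C ω) := Finset.sum_le_sum fun ω _ ↦
      smul_le_smul_of_nonneg_left (hexp ω ▸ cfc_exp_le_one_add_six_fifths_smul (hpsd ω).nonneg
        (((hpsd ω).isHermitian.le_algebraMap_norm).trans (by gcongr; exact hnorm ω))) (hp ω)
    _ = 1 + (6 / 5 : ℝ) • ∑ ω, p ω • C ω := by
      simp only [smul_add, Finset.sum_add_distrib, ← Finset.sum_smul, hsum, one_smul,
        Finset.smul_sum, smul_comm (6 / 5 : ℝ)]
  have hE : IsStrictlyPositive E :=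
    (StarOrderedRing.isStrictlyPositive_iff_spectrum_pos (R := ℝ) E).2 fun x hx ↦
      zero_lt_one.trans_le ((CFC.one_le_iff E).1 one_le_E x hx)
  rw [← Matrix.le_iff]
  calc CFC.log E ≤ E - 1 := CFC.log_le_sub_one hE
    _ ≤ (6 / 5 : ℝ) • ∑ ω, p ω • C ω := sub_le_iff_le_add'.2 E_le
end

section
/- The function f(z) = (e^z − z − 1)/z² (extended by f(0) = 1/2) is positive and monotonically increasing on all of ℝ, and f(1) ≤ 4/5. -/
/-!
Taylor's formula with integral remainder writes the function as a weighted average of exponentials,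
`(e^z - z - 1)/z² = ∫₀¹ (1 - t) e^{tz} dt`, which is also `1/2` at `z = 0`. The integrand is positive
and increasing in `z` for every `t ∈ [0, 1]`, so the integral is positive and monotone, and its value
at `1` is `e - 2 < 4/5`.
-/

open Real intervalIntegral

/-- The function `φ₂` of exponential integrators. -/
noncomputable def phiTwo (z : ℝ) : ℝ := ∫ t in (0 : ℝ)..1, (1 - t) * exp (t * z)

lemma continuous_one_sub_mul_exp_mul (z : ℝ) : Continuous fun t : ℝ => (1 - t) * exp (t * z) := by
  fun_prop

lemma phiTwo_zero : phiTwo 0 = 1 / 2 := by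
  simp [phiTwo, integral_comp_sub_left fun t => t]

lemma hasDerivAt_antideriv_one_sub_mul_exp_mul {z : ℝ} (hz : z ≠ 0) (t : ℝ) :
    HasDerivAt (fun t => ((1 - t) / z + 1 / z ^ 2) * exp (t * z)) ((1 - t) * exp (t * z)) t :=
  ((((hasDerivAt_id' t).const_sub 1).div_const z).add_const (1 / z ^ 2)).fun_mul
    ((hasDerivAt_mul_const z).exp) |>.congr_deriv (by field_simp; ring)

lemma phiTwo_of_ne_zero {z : ℝ} (hz : z ≠ 0) : phiTwo z = (exp z - z - 1) / z ^ 2 := by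
  rw [phiTwo, integral_eq_sub_of_hasDerivAt
    (fun t _ => hasDerivAt_antideriv_one_sub_mul_exp_mul hz t)
    ((continuous_one_sub_mul_exp_mul z).intervalIntegrable 0 1)]
  simp only [one_div, sub_self, zero_div, zero_add, zero_mul, exp_zero, one_mul, mul_one]
  field_simp
  ring

lemma phiTwo_pos (z : ℝ) : 0 < phiTwo z :=
  intervalIntegral_pos_of_pos_on ((continuous_one_sub_mul_exp_mul z).intervalIntegrable 0 1)
    (fun _ ht => mul_pos (sub_pos.mpr ht.2) (exp_pos _)) zero_lt_one

lemma monotone_phiTwo : Monotone phiTwo := fun x y hxy =>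
  integral_mono_on zero_le_one ((continuous_one_sub_mul_exp_mul x).intervalIntegrable 0 1)
    ((continuous_one_sub_mul_exp_mul y).intervalIntegrable 0 1) fun _ ht =>
      mul_le_mul_of_nonneg_left (exp_le_exp.mpr (mul_le_mul_of_nonneg_left hxy ht.1))
        (sub_nonneg.mpr ht.2)

/-- The function `f z = (e^z - z - 1)/z²` (extended by `f 0 = 1/2`) is
positive and monotonically increasing on all of `ℝ`, and `f 1 ≤ 4/5`. -/
theorem f_pos_monotone_and_f_one_le
    (f : ℝ → ℝ)
    (hf : f = fun z => if z = 0 then 1 / 2 else (Real.exp z - z - 1) / z ^ 2) :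
    (∀ z, 0 < f z) ∧ Monotone f ∧ f 1 ≤ 4 / 5 := by
  have hf_eq : f = phiTwo := by
    funext z
    rcases eq_or_ne z 0 with rfl | hz
    · simp [hf, phiTwo_zero]
    · simp [hf, hz, phiTwo_of_ne_zero hz]
  subst hf_eq
  refine ⟨phiTwo_pos, monotone_phiTwo, ?_⟩
  rw [phiTwo_of_ne_zero one_ne_zero]
  linarith [exp_one_lt_d9]
end

section
/- The trace exponential is monotone with respect to the Loewner order: if A and B are symmetric matrices with A ⪯ B, then tr(exp(A)) ≤ tr(exp(B)). -/
/-!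
Conjugate both matrices by an orthogonal matrix `U` diagonalizing `A`; this changes neither the
Loewner order nor the trace of the exponential. The eigenvalues of `A` are then bounded by the
diagonal entries of `M = Uᵀ B U`, and by Jensen's inequality for the convex function `exp`
(Peierls' inequality) `exp (M i i) ≤ (exp M) i i`, since `M i i` is a convex combination of the
eigenvalues of `M` with the same weights that express `(exp M) i i` through their exponentials.
-/

open Matrix NormedSpace Finset

namespace Matrix

variable {n : Type*} [Fintype n] [DecidableEq n]

lemma exp_conj_unitary {𝕜 : Type*} [RCLike 𝕜] (U : unitaryGroup n 𝕜) (X : Matrix n n 𝕜) :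
    exp ((U : Matrix n n 𝕜) * X * star (U : Matrix n n 𝕜)) =
      U * exp X * star (U : Matrix n n 𝕜) := by
  simpa using exp_units_conj (Unitary.toUnits U) X

lemma trace_exp_star_conj_unitary {𝕜 : Type*} [RCLike 𝕜] (U : unitaryGroup n 𝕜)
    (X : Matrix n n 𝕜) : (exp (star (U : Matrix n n 𝕜) * X * U)).trace = (exp X).trace := by
  have h := exp_conj_unitary (star U) X
  simp only [Unitary.coe_star, star_star] at h
  rw [h, trace_mul_cycle, Unitary.mul_star_self_of_mem U.2, one_mul]

lemma trace_exp_diagonal (v : n → ℝ) : (exp (diagonal v)).trace = ∑ i, Real.exp (v i) := by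
  simp [exp_diagonal, trace_diagonal, Real.exp_eq_exp_ℝ]

lemma conj_unitary_diagonal_apply_self (U : unitaryGroup n ℝ) (v : n → ℝ) (i : n) :
    ((U : Matrix n n ℝ) * diagonal v * star (U : Matrix n n ℝ)) i i = ∑ j, U i j ^ 2 * v j := by
  rw [mul_apply]
  refine sum_congr rfl fun j _ => ?_
  rw [mul_diagonal, star_apply, star_trivial]
  ring

lemma sum_sq_unitary_apply (U : unitaryGroup n ℝ) (i : n) : ∑ j, U i j ^ 2 = 1 := by
  have h := conj_unitary_diagonal_apply_self U (fun _ => 1) i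
  rw [diagonal_one, Matrix.mul_one, Unitary.mul_star_self_of_mem U.2] at h
  simpa using h.symm

lemma IsHermitian.exp_apply_self_le {M : Matrix n n ℝ} (hM : M.IsHermitian) (i : n) :
    Real.exp (M i i) ≤ NormedSpace.exp M i i := by
  obtain ⟨V, ν, rfl⟩ : ∃ (V : unitaryGroup n ℝ) (ν : n → ℝ),
      M = V * diagonal ν * star (V : Matrix n n ℝ) :=
    ⟨hM.eigenvectorUnitary, hM.eigenvalues,
      by simpa [Unitary.conjStarAlgAut_apply] using hM.spectral_theorem⟩
  rw [exp_conj_unitary, exp_diagonal, conj_unitary_diagonal_apply_self,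
    conj_unitary_diagonal_apply_self]
  simpa [smul_eq_mul, mul_comm, Real.exp_eq_exp_ℝ] using
    convexOn_exp.map_sum_le (t := univ) (w := fun j => V i j ^ 2) (p := ν)
      (fun j _ => sq_nonneg _) (sum_sq_unitary_apply V i) (fun j _ => Set.mem_univ _)

end Matrix

/-- The trace exponential is monotone with respect to the Loewner order:
if `A` and `B` are real symmetric matrices with `A ⪯ B`, then `tr(exp A) ≤ tr(exp B)`. -/
theorem trace_exp_monotone
    {d : Type*} [Fintype d] [DecidableEq d]
    (A B : Matrix d d ℝ) (hA : A.IsHermitian) (hB : B.IsHermitian)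
    (hAB : (B - A).PosSemidef) :
    (NormedSpace.exp A).trace ≤ (NormedSpace.exp B).trace := by
  set U := hA.eigenvectorUnitary
  set M := star (U : Matrix d d ℝ) * B * U
  have hA_diag : star (U : Matrix d d ℝ) * A * U = diagonal hA.eigenvalues := by
    simpa [Unitary.conjStarAlgAut_star_apply] using hA.conjStarAlgAut_star_eigenvectorUnitary
  have hM : M.IsHermitian := isHermitian_conjTranspose_mul_mul (U : Matrix d d ℝ) hB
  have hle : ∀ i, hA.eigenvalues i ≤ M i i := fun i => by
    have h := (hAB.conjTranspose_mul_mul_same (U : Matrix d d ℝ)).diag_nonneg (i := i)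
    rw [mul_sub, sub_mul, ← star_eq_conjTranspose, hA_diag] at h
    simpa using h
  calc (exp A).trace = ∑ i, Real.exp (hA.eigenvalues i) := by
        rw [← trace_exp_star_conj_unitary U, hA_diag, trace_exp_diagonal]
    _ ≤ ∑ i, Real.exp (M i i) := sum_le_sum fun i _ => Real.exp_le_exp.mpr (hle i)
    _ ≤ ∑ i, exp M i i := sum_le_sum fun i _ => hM.exp_apply_self_le i
    _ = (exp B).trace := trace_exp_star_conj_unitary U B
end

section
/- With the truncation setup, P[−εI ⋠ Z or Z ⋠ εI] ≤ P[−εI ⋠ Z̃ or Z̃ ⋠ εI], where Z̃ is the ε-truncated sum; i.e., the truncated sum fails at least as often as the original sum. -/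
/-!
Up to the first index `h ≥ 1` at which the partial sum `W₀ + ⋯ + W_{h-1}` leaves the set
`{X | X ⪯ εI}`, the truncated sum follows the original partial sums, and afterwards it is frozen
at that partial sum. So either no partial sum leaves the set and `Z̃ = Z`, or `Z̃` itself lies
outside it; in both cases a failure of `Z` is a failure of `Z̃`.
-/

open scoped Classical

open Finset

section Truncation

variable {M : Type*} [AddCommMonoid M] (P : M → Prop) (w : ℕ → M)

/-- The paper's event `A_h`, at a fixed outcome. -/
def PartialSumsSatisfy (h : ℕ) : Prop :=
  ∀ j, 1 ≤ j → j < h → P (∑ i ∈ range j, w i)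

noncomputable def truncatedSum (k : ℕ) : M :=
  ∑ i ∈ range k, if PartialSumsSatisfy P w (i + 1) then w i else 0

lemma partialSumsSatisfy_one : PartialSumsSatisfy P w 1 :=
  fun _ hj hj' => absurd hj' (by omega)

lemma partialSumsSatisfy_succ_succ_iff (h : ℕ) :
    PartialSumsSatisfy P w (h + 2) ↔
      PartialSumsSatisfy P w (h + 1) ∧ P (∑ i ∈ range (h + 1), w i) := by
  constructor
  · intro hs
    exact ⟨fun j hj hjh => hs j hj (by omega), hs (h + 1) (by omega) (by omega)⟩
  · rintro ⟨hs, hP⟩ j hj hjh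
    rcases Nat.lt_succ_iff_lt_or_eq.mp hjh with hjh | rfl
    exacts [hs j hj hjh, hP]

/-- The truncated sum is the partial-sum process stopped at its first exit from `P`. -/
lemma truncatedSum_spec (k : ℕ) :
    (PartialSumsSatisfy P w (k + 1) → truncatedSum P w k = ∑ i ∈ range k, w i) ∧
      (¬ PartialSumsSatisfy P w (k + 1) → ¬ P (truncatedSum P w k)) := by
  induction k with
  | zero => exact ⟨fun _ => rfl, fun h => absurd (partialSumsSatisfy_one P w) h⟩
  | succ k ih =>
    have hstep : truncatedSum P w (k + 1) =
        truncatedSum P w k + if PartialSumsSatisfy P w (k + 1) then w k else 0 :=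
      sum_range_succ _ k
    by_cases hk : PartialSumsSatisfy P w (k + 1)
    · have hfollows : truncatedSum P w (k + 1) = ∑ i ∈ range (k + 1), w i := by
        rw [hstep, if_pos hk, ih.1 hk, sum_range_succ]
      rw [hfollows, partialSumsSatisfy_succ_succ_iff]
      exact ⟨fun _ => rfl, fun hfail hP => hfail ⟨hk, hP⟩⟩
    · have hfrozen : truncatedSum P w (k + 1) = truncatedSum P w k := by
        rw [hstep, if_neg hk, add_zero]
      rw [hfrozen, partialSumsSatisfy_succ_succ_iff]
      exact ⟨fun h => absurd h.1 hk, fun _ => ih.2 hk⟩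

lemma truncatedSum_eq_sum_of_satisfies {k : ℕ} (hP : P (truncatedSum P w k)) :
    truncatedSum P w k = ∑ i ∈ range k, w i :=
  (truncatedSum_spec P w k).1 (by_contra fun h => (truncatedSum_spec P w k).2 h hP)

end Truncation

theorem truncated_martingale_failure_domination_general
    {d Ω : Type*} [Fintype d] [DecidableEq d] [Fintype Ω]
    (p : Ω → ℝ) (hp : ∀ ω, 0 ≤ p ω)
    (k : ℕ) (W : ℕ → Ω → Matrix d d ℝ) (ε : ℝ)
    (A : ℕ → Set Ω)
    (hA : ∀ h, A h = {ω | ∀ j, 1 ≤ j → j < h →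
      (ε • (1 : Matrix d d ℝ) - ∑ i ∈ Finset.range j, W i ω).PosSemidef})
    (Z Zt : Ω → Matrix d d ℝ)
    (hZ : Z = fun ω => ∑ i ∈ Finset.range k, W i ω)
    (hZt : Zt = fun ω => ∑ i ∈ Finset.range k,
      (if ω ∈ A (i + 1) then (1 : ℝ) else 0) • W i ω) :
    ∑ ω ∈ Finset.univ.filter (fun ω =>
        ¬ (ε • (1 : Matrix d d ℝ) + Z ω).PosSemidef ∨
        ¬ (ε • (1 : Matrix d d ℝ) - Z ω).PosSemidef), p ω
      ≤ ∑ ω ∈ Finset.univ.filter (fun ω =>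
        ¬ (ε • (1 : Matrix d d ℝ) + Zt ω).PosSemidef ∨
        ¬ (ε • (1 : Matrix d d ℝ) - Zt ω).PosSemidef), p ω := by
  refine sum_le_sum_of_subset_of_nonneg (fun ω => ?_) (fun ω _ _ => hp ω)
  simp only [mem_filter, mem_univ, true_and]
  contrapose!
  rintro ⟨hlower, hupper⟩
  set P : Matrix d d ℝ → Prop := fun X => (ε • 1 - X).PosSemidef
  have hZt_trunc : Zt ω = truncatedSum P (W · ω) k := by
    simp only [hZt, truncatedSum, PartialSumsSatisfy, ite_smul, one_smul, zero_smul, hA,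
      Set.mem_ofPred_eq, P]
  have hZt_eq : Zt ω = Z ω := by
    rw [hZ, hZt_trunc]
    exact truncatedSum_eq_sum_of_satisfies P _ (hZt_trunc ▸ hupper)
  exact hZt_eq ▸ ⟨hlower, hupper⟩

/-- With the truncation setup (finitely supported randomness, weights
`p`), `P[-εI ⋠ Z or Z ⋠ εI] ≤ P[-εI ⋠ Z̃ or Z̃ ⋠ εI]`, where `Z = Σ_{i=1}^k W_i` and
`Z̃ = Σ_{i=1}^k 1[A_i] • W_i` is the `ε`-truncated sum: the truncated sum fails at least
as often as the original sum. -/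
theorem truncated_martingale_failure_domination
    {d Ω : Type*} [Fintype d] [DecidableEq d] [Fintype Ω]
    (p : Ω → ℝ) (hp : ∀ ω, 0 ≤ p ω) (hsum : ∑ ω, p ω = 1)
    (k : ℕ) (W : ℕ → Ω → Matrix d d ℝ) (ε : ℝ) (hε : 0 < ε)
    (A : ℕ → Set Ω)
    (hA : ∀ h, A h = {ω | ∀ j, 1 ≤ j → j < h →
      (ε • (1 : Matrix d d ℝ) - ∑ i ∈ Finset.range j, W i ω).PosSemidef})
    (Z Zt : Ω → Matrix d d ℝ)
    (hZ : Z = fun ω => ∑ i ∈ Finset.range k, W i ω)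
    (hZt : Zt = fun ω => ∑ i ∈ Finset.range k,
      (if ω ∈ A (i + 1) then (1 : ℝ) else 0) • W i ω) :
    ∑ ω ∈ Finset.univ.filter (fun ω =>
        ¬ (ε • (1 : Matrix d d ℝ) + Z ω).PosSemidef ∨
        ¬ (ε • (1 : Matrix d d ℝ) - Z ω).PosSemidef), p ω
      ≤ ∑ ω ∈ Finset.univ.filter (fun ω =>
        ¬ (ε • (1 : Matrix d d ℝ) + Zt ω).PosSemidef ∨
        ¬ (ε • (1 : Matrix d d ℝ) - Zt ω).PosSemidef), p ω :=
  truncated_martingale_failure_domination_general p hp k W ε A hA Z Zt hZ hZt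
end
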